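/- For every integer n ≥ 4, the broom B(n,3) satisfies ecc(B(n,3)) ≤ ecc(P_n) − 1/2 − 1/(2n), with equality if and only if n is odd. Moreover, ecc(B(n,3)) = ((n−1)·ecc(P_{n−1}) + (n−2))/n. -/

import Mathlib

/-!
Fold the twin leaves `n - 2` and `n - 1` of `B(n,3)` onto each other: this is a graph
homomorphism onto `P_{n-1}` with two sections (one through each leaf), and a homomorphic
section of a homomorphism is an isometric embedding. Any two vertices other than the two
leaves lie on a common section, so the eccentricity of `v` in the broom is that of its image
in `P_{n-1}`; the extra leaf contributes `n - 2`. Passing from `P_{n-1}` to `P_n` adds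
`n - 1 + ⌊n/2⌋`, so the gap in the total eccentricity is `1 + ⌊n/2⌋ ≥ (n + 1)/2`, with
equality exactly for odd `n`.
-/

open SimpleGraph

/-- The eccentricity of a vertex: the maximum distance from it to any other vertex. -/
noncomputable def eccentricity {V : Type*} [Fintype V] (G : SimpleGraph V) (v : V) : ℕ :=
  Finset.univ.sup fun u => G.dist v u

/-- The average eccentricity of a graph. -/
noncomputable def avgEcc {V : Type*} [Fintype V] (G : SimpleGraph V) : ℝ :=
  (∑ v : V, (eccentricity G v : ℝ)) / (Fintype.card V : ℝ)

/-- The broom `B(n, Δ)`: a path `0 — 1 — ⋯ — (n-Δ)` together with `Δ-1` pendant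
vertices `n-Δ+1, …, n-1` attached to the vertex `n-Δ`. -/
def broom (n Δ : ℕ) : SimpleGraph (Fin n) :=
  SimpleGraph.fromRel (fun i j =>
    ((i : ℕ) + 1 = (j : ℕ) ∧ (j : ℕ) ≤ n - Δ) ∨ ((i : ℕ) = n - Δ ∧ n - Δ < (j : ℕ)))

section Eccentricity

variable {V : Type*} [Fintype V] (G : SimpleGraph V)

lemma dist_le_eccentricity (v u : V) : G.dist v u ≤ eccentricity G v :=
  Finset.le_sup (f := fun u => G.dist v u) (Finset.mem_univ u)

lemma eccentricity_le_iff {v : V} {k : ℕ} : eccentricity G v ≤ k ↔ ∀ u, G.dist v u ≤ k := by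
  simp [eccentricity]

end Eccentricity

namespace SimpleGraph

variable {V W : Type*} {G : SimpleGraph V} {H : SimpleGraph W}

lemma Hom.dist_map_le (f : G →g H) {u v : V} (h : G.Reachable u v) :
    H.dist (f u) (f v) ≤ G.dist u v := by
  obtain ⟨p, hp⟩ := h.exists_walk_length_eq_dist
  rw [← hp, ← p.length_map f]
  exact dist_le _

lemma Hom.dist_map_eq_of_leftInverse {f : G →g H} {s : H →g G} (hfs : ∀ w, f (s w) = w)
    (hG : G.Preconnected) (hH : H.Preconnected) (a b : W) :
    G.dist (s a) (s b) = H.dist a b := by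
  refine le_antisymm (s.dist_map_le (hH a b)) ?_
  simpa only [hfs] using f.dist_map_le (hG (s a) (s b))

lemma Walk.natDist_le_length {n : ℕ} {u v : Fin n} (p : (pathGraph n).Walk u v) :
    Nat.dist u v ≤ p.length := by
  induction p with
  | nil => simp
  | cons h _ ih =>
    rw [Walk.length_cons]
    have := pathGraph_adj.1 h
    unfold Nat.dist at ih ⊢
    omega

lemma pathGraph_dist_le_of_val_eq_add {n : ℕ} :
    ∀ (d : ℕ) {u v : Fin n}, (v : ℕ) = u + d → (pathGraph n).dist u v ≤ d
  | 0, u, v, h => by rw [Fin.ext (show (u : ℕ) = v by omega), dist_self]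
  | d + 1, u, v, h => by
    let w : Fin n := ⟨u + d, by omega⟩
    have hwv : (pathGraph n).Adj w v := pathGraph_adj.2 (Or.inl h.symm)
    calc (pathGraph n).dist u v ≤ (pathGraph n).dist u w + (pathGraph n).dist w v :=
          (pathGraph_preconnected n u w).dist_triangle_left v
      _ ≤ d + 1 := by
          rw [dist_eq_one_iff_adj.2 hwv]
          exact Nat.add_le_add_right (pathGraph_dist_le_of_val_eq_add d rfl) 1

theorem pathGraph_dist {n : ℕ} (u v : Fin n) : (pathGraph n).dist u v = Nat.dist u v := by
  refine le_antisymm ?_ ?_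
  · rcases le_total (u : ℕ) v with h | h
    · rw [Nat.dist_eq_sub_of_le h]
      exact pathGraph_dist_le_of_val_eq_add _ (by omega)
    · rw [Nat.dist_eq_sub_of_le_right h, dist_comm]
      exact pathGraph_dist_le_of_val_eq_add _ (by omega)
  · obtain ⟨p, hp⟩ := (pathGraph_preconnected n u v).exists_walk_length_eq_dist
    exact hp ▸ p.natDist_le_length

end SimpleGraph

lemma eccentricity_pathGraph {n : ℕ} (a : Fin n) :
    eccentricity (pathGraph n) a = max (a : ℕ) (n - 1 - a) := by
  have ha := a.isLt
  refine le_antisymm ((eccentricity_le_iff _).2 fun u => ?_) (max_le ?_ ?_)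
  · rw [pathGraph_dist]
    unfold Nat.dist
    omega
  · simpa [pathGraph_dist, Nat.dist] using dist_le_eccentricity (pathGraph n) a ⟨0, by omega⟩
  · have := dist_le_eccentricity (pathGraph n) a ⟨n - 1, by omega⟩
    simp only [pathGraph_dist, Nat.dist] at this
    omega

lemma sum_eccentricity_pathGraph_succ (m : ℕ) :
    ∑ v, eccentricity (pathGraph (m + 1)) v =
      ∑ v, eccentricity (pathGraph m) v + m + (m + 1) / 2 := by
  simp only [eccentricity_pathGraph, Nat.add_sub_cancel]
  rw [Fin.sum_univ_eq_sum_range (fun i => max i (m - i)),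
    Fin.sum_univ_eq_sum_range (fun i => max i (m - 1 - i)), Finset.sum_range_succ]
  have hstep : ∀ i ∈ Finset.range m,
      max i (m - i) = max i (m - 1 - i) + if 2 * i < m then 1 else 0 := by
    intro i hi
    rw [Finset.mem_range] at hi
    split <;> omega
  have hcount : ((Finset.range m).filter (fun i => 2 * i < m)).card = (m + 1) / 2 := by
    rw [show (Finset.range m).filter (fun i => 2 * i < m) = Finset.range ((m + 1) / 2) by
      ext i; simp only [Finset.mem_filter, Finset.mem_range]; omega]
    exact Finset.card_range _
  rw [Finset.sum_congr rfl hstep, Finset.sum_add_distrib, Finset.sum_boole, hcount]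
  simp only [Nat.cast_id, Nat.sub_self, max_eq_left (Nat.zero_le m)]
  omega

lemma broom_adj {n Δ : ℕ} {u v : Fin n} :
    (broom n Δ).Adj u v ↔ (u : ℕ) ≠ v ∧
      (((u : ℕ) + 1 = v ∧ (v : ℕ) ≤ n - Δ) ∨ ((u : ℕ) = n - Δ ∧ n - Δ < v) ∨
        ((v : ℕ) + 1 = u ∧ (u : ℕ) ≤ n - Δ) ∨ ((v : ℕ) = n - Δ ∧ n - Δ < u)) := by
  simp only [broom, fromRel_adj, ne_eq, Fin.ext_iff]
  tauto

section Broom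

variable {m : ℕ}

def broomFold (hm : 2 ≤ m) : broom (m + 1) 3 →g pathGraph m where
  toFun v := ⟨min v (m - 1), by omega⟩
  map_rel' h := by
    rw [broom_adj] at h
    rw [pathGraph_adj]
    dsimp only
    omega

-- The section of `broomFold` through the leaf `ℓ ∈ {m - 1, m}`.
def pathGraphToBroom (ℓ : Fin (m + 1)) (hℓ : m - 1 ≤ ℓ) : pathGraph m →g broom (m + 1) 3 where
  toFun a := if (a : ℕ) + 1 = m then ℓ else a.castSucc
  map_rel' {a b} h := by
    rw [pathGraph_adj] at h
    rw [broom_adj]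
    simp only [apply_ite Fin.val, Fin.val_castSucc]
    have := a.isLt
    have := b.isLt
    split_ifs <;> omega

lemma broomFold_pathGraphToBroom (hm : 2 ≤ m) (ℓ : Fin (m + 1)) (hℓ : m - 1 ≤ ℓ) (a : Fin m) :
    broomFold hm (pathGraphToBroom ℓ hℓ a) = a := by
  ext
  have := a.isLt
  simp only [broomFold, pathGraphToBroom, RelHom.coeFn_mk, apply_ite Fin.val, Fin.val_castSucc]
  split_ifs <;> omega

lemma exists_pathGraphToBroom_eq (hm : 2 ≤ m) {u v : Fin (m + 1)}
    (huv : (u : ℕ) < m - 1 ∨ (v : ℕ) < m - 1 ∨ u = v) :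
    ∃ ℓ hℓ, pathGraphToBroom ℓ hℓ (broomFold hm u) = u ∧
      pathGraphToBroom ℓ hℓ (broomFold hm v) = v := by
  have key : ∀ {ℓ : Fin (m + 1)} (hℓ : m - 1 ≤ ℓ) {w : Fin (m + 1)}, (m - 1 ≤ w → w = ℓ) →
      pathGraphToBroom ℓ hℓ (broomFold hm w) = w := by
    intro ℓ hℓ w hw
    have := w.isLt
    simp only [broomFold, pathGraphToBroom, RelHom.coeFn_mk]
    split_ifs with h
    · exact (hw (by omega)).symm
    · ext
      simp only [Fin.val_castSucc]
      omega
  by_cases hu : m - 1 ≤ (u : ℕ)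
  · exact ⟨u, hu, key hu fun _ => rfl, key hu (by omega)⟩
  · by_cases hv : m - 1 ≤ (v : ℕ)
    · exact ⟨v, hv, key hv (by omega), key hv fun _ => rfl⟩
    · exact ⟨Fin.last m, by simp, key (by simp) (by omega), key (by simp) (by omega)⟩

lemma broom_preconnected (hm : 2 ≤ m) : (broom (m + 1) 3).Preconnected := by
  have toZero : ∀ u : Fin (m + 1), (broom (m + 1) 3).Reachable u 0 := by
    intro u
    obtain ⟨ℓ, hℓ, hu, h0⟩ :=
      exists_pathGraphToBroom_eq hm (u := u) (v := 0) (by simp only [Fin.val_zero]; omega)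
    rw [← hu, ← h0]
    exact (pathGraph_preconnected m _ _).map _
  exact fun u v => (toZero u).trans (toZero v).symm

lemma broom_dist_pathGraphToBroom (hm : 2 ≤ m) (ℓ : Fin (m + 1)) (hℓ : m - 1 ≤ ℓ) (a b : Fin m) :
    (broom (m + 1) 3).dist (pathGraphToBroom ℓ hℓ a) (pathGraphToBroom ℓ hℓ b) =
      (pathGraph m).dist a b :=
  Hom.dist_map_eq_of_leftInverse (broomFold_pathGraphToBroom hm ℓ hℓ) (broom_preconnected hm)
    (pathGraph_preconnected m) a b

lemma eccentricity_broom (hm : 3 ≤ m) (v : Fin (m + 1)) :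
    eccentricity (broom (m + 1) 3) v = eccentricity (pathGraph m) (broomFold (by omega) v) := by
  have hm2 : 2 ≤ m := by omega
  refine le_antisymm ((eccentricity_le_iff _).2 fun u => ?_)
    ((eccentricity_le_iff _).2 fun a => ?_)
  · by_cases huv : (v : ℕ) < m - 1 ∨ (u : ℕ) < m - 1 ∨ v = u
    · obtain ⟨ℓ, hℓ, hv, hu⟩ := exists_pathGraphToBroom_eq hm2 huv
      rw [← hv, ← hu, broom_dist_pathGraphToBroom hm2, broomFold_pathGraphToBroom]
      exact dist_le_eccentricity _ _ _
    · -- `v` and `u` are the two leaves, joined through the hub `m - 2`.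
      let hub : Fin (m + 1) := ⟨m - 2, by omega⟩
      have hvh : (broom (m + 1) 3).Adj v hub := broom_adj.2 (by simp only [hub]; omega)
      have hhu : (broom (m + 1) 3).Adj hub u := broom_adj.2 (by simp only [hub]; omega)
      calc (broom (m + 1) 3).dist v u ≤ 2 := dist_le (.cons hvh (.cons hhu .nil))
        _ ≤ eccentricity (pathGraph m) (broomFold hm2 v) := by
          rw [eccentricity_pathGraph]
          simp only [broomFold, RelHom.coeFn_mk]
          omega
  · let s := pathGraphToBroom (Fin.last m) (by simp)
    calc (pathGraph m).dist (broomFold hm2 v) a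
        = (pathGraph m).dist (broomFold hm2 v) (broomFold hm2 (s a)) := by
          rw [broomFold_pathGraphToBroom]
      _ ≤ (broom (m + 1) 3).dist v (s a) := (broomFold hm2).dist_map_le (broom_preconnected hm2 _ _)
      _ ≤ eccentricity (broom (m + 1) 3) v := dist_le_eccentricity _ _ _

lemma sum_eccentricity_broom (hm : 3 ≤ m) :
    ∑ v, eccentricity (broom (m + 1) 3) v = ∑ a, eccentricity (pathGraph m) a + (m - 1) := by
  rw [Fin.sum_univ_castSucc]
  simp only [eccentricity_broom hm]
  congr 1
  · refine Finset.sum_congr rfl fun a _ => congrArg _ (Fin.ext ?_)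
    simp only [broomFold, RelHom.coeFn_mk, Fin.val_castSucc]
    omega
  · rw [eccentricity_pathGraph]
    simp only [broomFold, RelHom.coeFn_mk, Fin.val_last]
    omega

end Broom

lemma avgEcc_broom_three_eq {n : ℕ} (hn : 4 ≤ n) :
    avgEcc (broom n 3) = (((n : ℝ) - 1) * avgEcc (pathGraph (n - 1)) + ((n : ℝ) - 2)) / n := by
  obtain ⟨m, rfl⟩ : ∃ m, n = m + 1 := ⟨n - 1, by omega⟩
  have hm : (m : ℝ) ≠ 0 := by exact_mod_cast (by omega : m ≠ 0)
  rw [Nat.add_sub_cancel]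
  simp only [avgEcc, Fintype.card_fin, ← Nat.cast_sum, sum_eccentricity_broom (by omega : 3 ≤ m)]
  push_cast [Nat.cast_sub (by omega : 1 ≤ m)]
  field_simp
  ring

lemma avgEcc_pathGraph_sub_avgEcc_broom_three {n : ℕ} (hn : 4 ≤ n) :
    avgEcc (pathGraph n) - 1 / 2 - 1 / (2 * (n : ℝ)) - avgEcc (broom n 3) =
      (1 - (n % 2 : ℕ)) / (2 * n) := by
  obtain ⟨m, rfl⟩ : ∃ m, n = m + 1 := ⟨n - 1, by omega⟩
  have hdiv : ((2 * ((m + 1) / 2) + (m + 1) % 2 : ℕ) : ℝ) = m + 1 := by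
    rw [Nat.div_add_mod]; push_cast; ring
  simp only [avgEcc, Fintype.card_fin, ← Nat.cast_sum, sum_eccentricity_broom (by omega : 3 ≤ m),
    sum_eccentricity_pathGraph_succ]
  push_cast [Nat.cast_sub (by omega : 1 ≤ m)] at hdiv ⊢
  field_simp
  linear_combination hdiv

/-- For `n ≥ 4`: `ecc (B(n,3)) ≤ ecc (Pₙ) - 1/2 - 1/(2n)` with equality iff `n` is odd,
and `ecc (B(n,3)) = ((n-1)·ecc (P_{n-1}) + (n-2)) / n`. -/
theorem avgEcc_broom_three {n : ℕ} (hn : 4 ≤ n) :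
    (avgEcc (broom n 3) ≤
        avgEcc (SimpleGraph.pathGraph n) - 1 / 2 - 1 / (2 * (n : ℝ))) ∧
    (avgEcc (broom n 3) =
        avgEcc (SimpleGraph.pathGraph n) - 1 / 2 - 1 / (2 * (n : ℝ)) ↔ Odd n) ∧
    (avgEcc (broom n 3) =
        (((n : ℝ) - 1) * avgEcc (SimpleGraph.pathGraph (n - 1)) + ((n : ℝ) - 2)) / n) := by
  have hgap := avgEcc_pathGraph_sub_avgEcc_broom_three hn
  have hn0 : (0 : ℝ) < 2 * n := by positivity
  have hmod : ((n % 2 : ℕ) : ℝ) ≤ 1 := by exact_mod_cast (by omega : n % 2 ≤ 1)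
  refine ⟨?_, ?_, avgEcc_broom_three_eq hn⟩
  · rw [← sub_nonneg, hgap]
    exact div_nonneg (by linarith) hn0.le
  · rw [eq_comm, ← sub_eq_zero, hgap, div_eq_zero_iff, sub_eq_zero, eq_comm, Nat.odd_iff]
    exact_mod_cast or_iff_left hn0.ne'
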